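/- If T is self-adjoint with ‖T‖ < 1 and satisfies the braid relation, then P₃ = (1 + T₂)(1 + T₁ + T₁T₂) is strictly positive (positive and invertible). -/

import Mathlib

/-!
Write `a = T₁`, `b = T₂` and `P = (1 + b)(1 + a + ab)`. Expanding, `P` is self-adjoint for any
self-adjoint `a`, `b`, and the braid relation gives the second factorisation
`P = (1 + a)(1 + b + ba)`. As `1 + a` and `1 + b` are invertible, `(1 + b + ba) - b(1 + a + ab)
= 1 - bab` is a left multiple of `P`, and it is invertible since `‖bab‖ < 1`; so `P` has a left
inverse, hence (being self-adjoint) is invertible. Scaling `a, b` to `sa, sb` for `s ∈ [0, 1]`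
keeps all hypotheses, giving a continuous path of invertible self-adjoint elements from `1` to
`P`. An invertible positive element dominates a positive multiple of `1`, so positivity is an open
as well as a closed condition along the path, and `P ≥ 0`.

The amplifications `T ⊗ 1` and `1 ⊗ T` act on each slice of a vector of `H^{⊗3}` as `T`, and
the slices decompose the inner product, whence they are self-adjoint with norm at most `‖T‖`.
-/

/-- `ampl1 d T` is the amplification `T ⊗ 1` of an operator `T` on
`ℂ^d ⊗ ℂ^d` (modelled as `EuclideanSpace ℂ (Fin d × Fin d)`) to the triple
tensor power, acting on the first two tensor factors. -/
noncomputable def ampl1 (d : ℕ)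
    (T : EuclideanSpace ℂ (Fin d × Fin d) →L[ℂ] EuclideanSpace ℂ (Fin d × Fin d)) :
    EuclideanSpace ℂ (Fin d × Fin d × Fin d) →L[ℂ] EuclideanSpace ℂ (Fin d × Fin d × Fin d) :=
  LinearMap.toContinuousLinearMap
    { toFun := fun x => WithLp.toLp 2 ((fun p =>
        T (WithLp.toLp 2 (fun r => x (r.1, r.2, p.2.2) : Fin d × Fin d → ℂ)) (p.1, p.2.1)
        : Fin d × Fin d × Fin d → ℂ))
      map_add' := by
        intro x y; ext p
        have : (WithLp.toLp 2 (fun r => (x + y) (r.1, r.2, p.2.2) : Fin d × Fin d → ℂ) :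
            EuclideanSpace ℂ (Fin d × Fin d)) =
            (WithLp.toLp 2 (fun r => x (r.1, r.2, p.2.2) : Fin d × Fin d → ℂ) :
            EuclideanSpace ℂ (Fin d × Fin d)) +
            WithLp.toLp 2 (fun r => y (r.1, r.2, p.2.2) : Fin d × Fin d → ℂ) := rfl
        show T _ _ = _
        rw [this, map_add]; rfl
      map_smul' := by
        intro c x; ext p
        have : (WithLp.toLp 2 (fun r => (c • x) (r.1, r.2, p.2.2) : Fin d × Fin d → ℂ) :
            EuclideanSpace ℂ (Fin d × Fin d)) =
            c • (WithLp.toLp 2 (fun r => x (r.1, r.2, p.2.2) : Fin d × Fin d → ℂ) :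
            EuclideanSpace ℂ (Fin d × Fin d)) := rfl
        show T _ _ = _
        rw [this, map_smul]; rfl }

/-- `ampl2 d T` is the amplification `1 ⊗ T`, acting on the last two tensor
factors of the triple tensor power. -/
noncomputable def ampl2 (d : ℕ)
    (T : EuclideanSpace ℂ (Fin d × Fin d) →L[ℂ] EuclideanSpace ℂ (Fin d × Fin d)) :
    EuclideanSpace ℂ (Fin d × Fin d × Fin d) →L[ℂ] EuclideanSpace ℂ (Fin d × Fin d × Fin d) :=
  LinearMap.toContinuousLinearMap
    { toFun := fun x => WithLp.toLp 2 ((fun p =>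
        T (WithLp.toLp 2 (fun r => x (p.1, r.1, r.2) : Fin d × Fin d → ℂ)) (p.2.1, p.2.2)
        : Fin d × Fin d × Fin d → ℂ))
      map_add' := by
        intro x y; ext p
        have : (WithLp.toLp 2 (fun r => (x + y) (p.1, r.1, r.2) : Fin d × Fin d → ℂ) :
            EuclideanSpace ℂ (Fin d × Fin d)) =
            (WithLp.toLp 2 (fun r => x (p.1, r.1, r.2) : Fin d × Fin d → ℂ) :
            EuclideanSpace ℂ (Fin d × Fin d)) +
            WithLp.toLp 2 (fun r => y (p.1, r.1, r.2) : Fin d × Fin d → ℂ) := rfl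
        show T _ _ = _
        rw [this, map_add]; rfl
      map_smul' := by
        intro c x; ext p
        have : (WithLp.toLp 2 (fun r => (c • x) (p.1, r.1, r.2) : Fin d × Fin d → ℂ) :
            EuclideanSpace ℂ (Fin d × Fin d)) =
            c • (WithLp.toLp 2 (fun r => x (p.1, r.1, r.2) : Fin d × Fin d → ℂ) :
            EuclideanSpace ℂ (Fin d × Fin d)) := rfl
        show T _ _ = _
        rw [this, map_smul]; rfl }

open scoped InnerProductSpace

section Slices

variable {𝕜 E F ι : Type*} [RCLike 𝕜] [NormedAddCommGroup E] [InnerProductSpace 𝕜 E]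
  [NormedAddCommGroup F] [InnerProductSpace 𝕜 F] [Fintype ι]

lemma norm_sq_eq_sum_of_inner_eq_sum {σ : ι → E → F}
    (hσ : ∀ x y, ⟪x, y⟫_𝕜 = ∑ k, ⟪σ k x, σ k y⟫_𝕜) (x : E) : ‖x‖ ^ 2 = ∑ k, ‖σ k x‖ ^ 2 := by
  simpa only [inner_self_eq_norm_sq, map_sum] using congrArg RCLike.re (hσ x x)

lemma isSelfAdjoint_of_forall_slice [CompleteSpace E] [CompleteSpace F] {σ : ι → E → F}
    (hσ : ∀ x y, ⟪x, y⟫_𝕜 = ∑ k, ⟪σ k x, σ k y⟫_𝕜) {A : E →L[𝕜] E} {T : F →L[𝕜] F}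
    (hAT : ∀ k x, σ k (A x) = T (σ k x)) (hT : IsSelfAdjoint T) : IsSelfAdjoint A := by
  rw [ContinuousLinearMap.isSelfAdjoint_iff_isSymmetric] at hT ⊢
  intro x y
  simp only [ContinuousLinearMap.coe_coe, hσ (A x), hσ x, hAT]
  exact Finset.sum_congr rfl fun k _ ↦ hT _ _

lemma opNorm_le_of_forall_slice {σ : ι → E → F}
    (hσ : ∀ x y, ⟪x, y⟫_𝕜 = ∑ k, ⟪σ k x, σ k y⟫_𝕜) {A : E →L[𝕜] E} {T : F →L[𝕜] F}
    (hAT : ∀ k x, σ k (A x) = T (σ k x)) : ‖A‖ ≤ ‖T‖ := by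
  refine A.opNorm_le_bound (norm_nonneg T) fun x ↦ ?_
  refine (pow_le_pow_iff_left₀ (norm_nonneg _) (by positivity) two_ne_zero).1 ?_
  calc ‖A x‖ ^ 2 = ∑ k, ‖T (σ k x)‖ ^ 2 := by
        simp only [norm_sq_eq_sum_of_inner_eq_sum hσ, hAT]
    _ ≤ ∑ k, (‖T‖ * ‖σ k x‖) ^ 2 := by
        gcongr with k
        exact T.le_opNorm _
    _ = (‖T‖ * ‖x‖) ^ 2 := by
        simp only [mul_pow, ← Finset.mul_sum, norm_sq_eq_sum_of_inner_eq_sum hσ x]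

end Slices

def sliceLast {d : ℕ} (k : Fin d) (x : EuclideanSpace ℂ (Fin d × Fin d × Fin d)) :
    EuclideanSpace ℂ (Fin d × Fin d) :=
  WithLp.toLp 2 fun r ↦ x (r.1, r.2, k)

def sliceFirst {d : ℕ} (i : Fin d) (x : EuclideanSpace ℂ (Fin d × Fin d × Fin d)) :
    EuclideanSpace ℂ (Fin d × Fin d) :=
  WithLp.toLp 2 fun r ↦ x (i, r.1, r.2)

lemma inner_eq_sum_inner_sliceLast {d : ℕ} (x y : EuclideanSpace ℂ (Fin d × Fin d × Fin d)) :
    ⟪x, y⟫_ℂ = ∑ k, ⟪sliceLast k x, sliceLast k y⟫_ℂ := by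
  simp only [PiLp.inner_apply, ← Fintype.sum_prod_type']
  exact Fintype.sum_equiv ⟨fun p ↦ (p.2.2, p.1, p.2.1), fun q ↦ (q.2.1, q.2.2, q.1),
    fun _ ↦ rfl, fun _ ↦ rfl⟩ _ _ fun _ ↦ rfl

lemma inner_eq_sum_inner_sliceFirst {d : ℕ} (x y : EuclideanSpace ℂ (Fin d × Fin d × Fin d)) :
    ⟪x, y⟫_ℂ = ∑ i, ⟪sliceFirst i x, sliceFirst i y⟫_ℂ := by
  simp only [PiLp.inner_apply, ← Fintype.sum_prod_type']
  rfl

def symmetrizer₃ {R : Type*} [Ring R] (a b : R) : R := (1 + b) * (1 + a + a * b)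

section Algebraic

variable {R : Type*} [Ring R] {a b : R}

lemma symmetrizer₃_eq_of_braid (h : a * b * a = b * a * b) :
    symmetrizer₃ a b = (1 + a) * (1 + b + b * a) := by
  unfold symmetrizer₃
  have e₁ : (1 + a) * (1 + b + b * a) = 1 + a + b + a * b + b * a + a * b * a := by noncomm_ring
  have e₂ : (1 + b) * (1 + a + a * b) = 1 + a + b + a * b + b * a + b * a * b := by noncomm_ring
  rw [e₁, e₂, h]

lemma isSelfAdjoint_symmetrizer₃ [StarRing R] (ha : IsSelfAdjoint a) (hb : IsSelfAdjoint b) :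
    IsSelfAdjoint (symmetrizer₃ a b) := by
  rw [IsSelfAdjoint, symmetrizer₃]
  simp only [star_mul, star_add, star_one, ha.star_eq, hb.star_eq]
  noncomm_ring

end Algebraic

lemma IsSelfAdjoint.isUnit_of_mul_eq_one {M : Type*} [Monoid M] [StarMul M] {p l : M}
    (hp : IsSelfAdjoint p) (h : l * p = 1) : IsUnit p := by
  have hr : p * star l = 1 := by simpa [hp.star_eq] using congrArg star h
  exact ⟨⟨p, l, left_inv_eq_right_inv h hr ▸ hr, h⟩, rfl⟩

lemma exists_mul_symmetrizer₃_eq_one {R : Type*} [NormedRing R] [HasSummableGeomSeries R]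
    {a b : R} (ha : ‖a‖ < 1) (hb : ‖b‖ < 1) (h : a * b * a = b * a * b) :
    ∃ l, l * symmetrizer₃ a b = 1 := by
  have unit_one_add {x : R} (hx : ‖x‖ < 1) : IsUnit (1 + x) := by
    simpa using isUnit_one_sub_of_norm_lt_one (x := -x) (by rwa [norm_neg])
  obtain ⟨u, hu⟩ := unit_one_add ha
  obtain ⟨v, hv⟩ := unit_one_add hb
  have hbab : ‖b * a * b‖ < 1 := calc
    ‖b * a * b‖ ≤ ‖b‖ * ‖a‖ * ‖b‖ := norm_mul₃_le
    _ < 1 := by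
      nlinarith [norm_nonneg a, norm_nonneg b, mul_nonneg (norm_nonneg b) (norm_nonneg a)]
  obtain ⟨w, hw⟩ := isUnit_one_sub_of_norm_lt_one hbab
  have key : (↑u⁻¹ - b * ↑v⁻¹) * symmetrizer₃ a b = 1 - b * a * b := by
    have h₁ : (↑u⁻¹ : R) * symmetrizer₃ a b = 1 + b + b * a := by
      rw [symmetrizer₃_eq_of_braid h, ← hu, Units.inv_mul_cancel_left]
    have h₂ : (↑v⁻¹ : R) * symmetrizer₃ a b = 1 + a + a * b := by
      rw [symmetrizer₃, ← hv, Units.inv_mul_cancel_left]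
    rw [sub_mul, mul_assoc, h₁, h₂]
    noncomm_ring
  refine ⟨↑w⁻¹ * (↑u⁻¹ - b * ↑v⁻¹), ?_⟩
  rw [mul_assoc, key, ← hw, Units.inv_mul]

lemma isUnit_symmetrizer₃ {R : Type*} [NormedRing R] [StarRing R] [HasSummableGeomSeries R]
    {a b : R} (ha : IsSelfAdjoint a) (hb : IsSelfAdjoint b) (ha₁ : ‖a‖ < 1) (hb₁ : ‖b‖ < 1)
    (h : a * b * a = b * a * b) : IsUnit (symmetrizer₃ a b) :=
  have ⟨_, hl⟩ := exists_mul_symmetrizer₃_eq_one ha₁ hb₁ h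
  (isSelfAdjoint_symmetrizer₃ ha hb).isUnit_of_mul_eq_one hl

section CStarAlgebra

variable {A : Type*} [CStarAlgebra A] [PartialOrder A] [StarOrderedRing A]

lemma IsStrictlyPositive.exists_forall_norm_sub_lt_nonneg {a : A} (ha : IsStrictlyPositive a) :
    ∃ r > 0, ∀ b, IsSelfAdjoint b → ‖b - a‖ < r → 0 ≤ b := by
  cases subsingleton_or_nontrivial A
  · exact ⟨1, one_pos, fun b _ _ ↦ (Subsingleton.elim 0 b).le⟩
  obtain ⟨r, hr, hra⟩ := (CFC.exists_pos_algebraMap_le_iff ha.isSelfAdjoint).2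
    fun x hx ↦ ha.spectrum_pos hx
  refine ⟨r, hr, fun b hb hba ↦ ?_⟩
  calc (0 : A) ≤ algebraMap ℝ A (r - ‖b - a‖) := algebraMap_nonneg _ (by linarith)
    _ = algebraMap ℝ A r + -algebraMap ℝ A ‖b - a‖ := by rw [map_sub, sub_eq_add_neg]
    _ ≤ a + (b - a) := add_le_add hra (hb.sub ha.isSelfAdjoint).neg_algebraMap_norm_le_self
    _ = b := add_sub_cancel a b

lemma Continuous.nonneg_of_forall_isUnit {X : Type*} [TopologicalSpace X] [PreconnectedSpace X]
    {f : X → A} (hf : Continuous f) (hsa : ∀ x, IsSelfAdjoint (f x)) (hunit : ∀ x, IsUnit (f x))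
    {x₀ : X} (h₀ : 0 ≤ f x₀) (x : X) : 0 ≤ f x := by
  have hclopen : IsClopen {x | 0 ≤ f x} := by
    refine ⟨isClosed_le continuous_const hf, isOpen_iff_mem_nhds.2 fun y hy ↦ ?_⟩
    obtain ⟨r, hr, hball⟩ := ((hunit y).isStrictlyPositive hy).exists_forall_norm_sub_lt_nonneg
    filter_upwards [hf.continuousAt.eventually (Metric.ball_mem_nhds (f y) hr)] with z hz
    exact hball _ (hsa z) (by rwa [dist_eq_norm] at hz)
  exact (hclopen.eq_univ ⟨x₀, h₀⟩).ge (Set.mem_univ x)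

lemma isStrictlyPositive_symmetrizer₃ {a b : A} (ha : IsSelfAdjoint a) (hb : IsSelfAdjoint b)
    (ha₁ : ‖a‖ < 1) (hb₁ : ‖b‖ < 1) (h : a * b * a = b * a * b) :
    IsStrictlyPositive (symmetrizer₃ a b) := by
  refine (isUnit_symmetrizer₃ ha hb ha₁ hb₁ h).isStrictlyPositive ?_
  have smul_isSelfAdjoint (s : ℝ) {x : A} (hx : IsSelfAdjoint x) : IsSelfAdjoint (s • x) :=
    (IsSelfAdjoint.all s).smul hx
  have norm_smul_lt (s : unitInterval) {x : A} (hx : ‖x‖ < 1) : ‖(s : ℝ) • x‖ < 1 := by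
    rw [norm_smul, Real.norm_of_nonneg s.2.1]
    nlinarith [s.2.2, norm_nonneg x]
  have braid_smul (s : ℝ) : s • a * (s • b) * (s • a) = s • b * (s • a) * (s • b) := by
    simp only [smul_mul_assoc, mul_smul_comm, smul_smul, h]
  let path : unitInterval → A := fun s ↦ symmetrizer₃ ((s : ℝ) • a) ((s : ℝ) • b)
  have hpath : Continuous path := by unfold path symmetrizer₃; fun_prop
  have h₀ : 0 ≤ path 0 := by simp [path, symmetrizer₃]
  have h₁ := hpath.nonneg_of_forall_isUnit
    (fun s ↦ isSelfAdjoint_symmetrizer₃ (smul_isSelfAdjoint _ ha) (smul_isSelfAdjoint _ hb))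
    (fun s ↦ isUnit_symmetrizer₃ (smul_isSelfAdjoint _ ha) (smul_isSelfAdjoint _ hb)
      (norm_smul_lt s ha₁) (norm_smul_lt s hb₁) (braid_smul s)) h₀ 1
  simpa [path] using h₁

end CStarAlgebra

theorem P3_strictly_positive_of_braided_norm_lt_one_general (d : ℕ)
    (T : EuclideanSpace ℂ (Fin d × Fin d) →L[ℂ] EuclideanSpace ℂ (Fin d × Fin d))
    (hsa : IsSelfAdjoint T) (hn : ‖T‖ < 1)
    (hbraid : ampl1 d T ∘L ampl2 d T ∘L ampl1 d T = ampl2 d T ∘L ampl1 d T ∘L ampl2 d T) :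
    ((1 + ampl2 d T) ∘L (1 + ampl1 d T + ampl1 d T ∘L ampl2 d T)).IsPositive ∧
      IsUnit ((1 + ampl2 d T) ∘L (1 + ampl1 d T + ampl1 d T ∘L ampl2 d T)) := by
  have slice₁ : ∀ k x, sliceLast k (ampl1 d T x) = T (sliceLast k x) := fun _ _ ↦ rfl
  have slice₂ : ∀ i x, sliceFirst i (ampl2 d T x) = T (sliceFirst i x) := fun _ _ ↦ rfl
  have hP := isStrictlyPositive_symmetrizer₃
    (isSelfAdjoint_of_forall_slice inner_eq_sum_inner_sliceLast slice₁ hsa)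
    (isSelfAdjoint_of_forall_slice inner_eq_sum_inner_sliceFirst slice₂ hsa)
    ((opNorm_le_of_forall_slice inner_eq_sum_inner_sliceLast slice₁).trans_lt hn)
    ((opNorm_le_of_forall_slice inner_eq_sum_inner_sliceFirst slice₂).trans_lt hn)
    hbraid
  exact ⟨(ContinuousLinearMap.nonneg_iff_isPositive _).1 hP.nonneg, hP.isUnit⟩

/-- If `T` is self-adjoint with `‖T‖ < 1` and satisfies the
braid relation, then `P₃ = (1 + T₂)(1 + T₁ + T₁T₂)` is strictly positive
(positive and invertible). -/
theorem P3_strictly_positive_of_braided_norm_lt_one (d : ℕ) (hd : 1 ≤ d)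
    (T : EuclideanSpace ℂ (Fin d × Fin d) →L[ℂ] EuclideanSpace ℂ (Fin d × Fin d))
    (hsa : IsSelfAdjoint T) (hn : ‖T‖ < 1)
    (hbraid : ampl1 d T ∘L ampl2 d T ∘L ampl1 d T = ampl2 d T ∘L ampl1 d T ∘L ampl2 d T) :
    ((1 + ampl2 d T) ∘L (1 + ampl1 d T + ampl1 d T ∘L ampl2 d T)).IsPositive ∧
      IsUnit ((1 + ampl2 d T) ∘L (1 + ampl1 d T + ampl1 d T ∘L ampl2 d T)) :=
  P3_strictly_positive_of_braided_norm_lt_one_general d T hsa hn hbraid
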